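/- arXiv:1507.07080 — 4 statements merged into one kernel-verified Lean document; each statement's English description precedes it below -/
import Mathlib

section
/- The number of phrases z in the LZ77 parsing of a string of length n over an alphabet of size σ ≥ 2 is O(n / log_σ n); more precisely, z ≤ c·n·(log σ)/(log n) for some absolute constant c and all n ≥ 2. -/
/-- `occursAt X p i len`: the substring of length `len` starting at `p`
equals the substring of length `len` starting at `i` (0-based). -/
def occursAt {α : Type*} (X : List α) (p i len : ℕ) : Prop :=
  p + len ≤ X.length ∧ i + len ≤ X.length ∧
    (X.drop p).take len = (X.drop i).take len

/-- `IsLZPhrase X i ℓ`: the LZ77 phrase starting at position `i` has length `ℓ`.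
Type (a): first occurrence of symbol `X[i]`, length 1.
Type (b): longest prefix of `X[i..]` occurring at some earlier position. -/
def IsLZPhrase {α : Type*} (X : List α) (i ℓ : ℕ) : Prop :=
  (ℓ = 1 ∧ i < X.length ∧ ∀ p < i, X[p]? ≠ X[i]?) ∨
  (1 ≤ ℓ ∧ (∃ p < i, occursAt X p i ℓ) ∧
    ∀ ℓ', i + ℓ' ≤ X.length → (∃ p < i, occursAt X p i ℓ') → ℓ' ≤ ℓ)

/-- `IsLZParse X L`: `L` is the list of phrase lengths of the LZ77 parsing
of `X`, each phrase starting at the sum of the previous lengths. -/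
def IsLZParse {α : Type*} (X : List α) (L : List ℕ) : Prop :=
  L.sum = X.length ∧
  ∀ k, (h : k < L.length) → IsLZPhrase X ((L.take k).sum) (L.get ⟨k, h⟩)


open Finset in
lemma lz_firstChar {α : Type*} (X : List α) (p q m : ℕ) (hm : 1 ≤ m)
    (h : (X.drop p).take m = (X.drop q).take m) : X[p]? = X[q]? := by
  have h0 := congrArg (fun l => l[0]?) h
  simpa [List.getElem?_take, List.getElem?_drop, show 0 < m by omega] using h0

lemma lz_sum_eq (L : List ℕ) : L.sum = ∑ t ∈ Finset.range L.length, L.getD t 0 := by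
  induction L with
  | nil => simp
  | cons a t ih => simp [Finset.sum_range_succ', ih, add_comm]

lemma lz_take_sum (L : List ℕ) (k : ℕ) :
    (L.take k).sum = ∑ t ∈ Finset.range k, L.getD t 0 := by
  induction k with
  | zero => simp
  | succ k ih =>
    by_cases hk : k < L.length
    · rw [List.sum_take_succ L k hk, Finset.sum_range_succ, ih,
        List.getD_eq_getElem L 0 hk]
    · push_neg at hk
      rw [Finset.sum_range_succ, ← ih]
      rw [List.take_of_length_le (le_trans hk (Nat.le_succ k)),
        List.take_of_length_le hk, List.getD_eq_default _ _ hk, add_zero]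

lemma lz_geom (σ d : ℕ) (hσ : 2 ≤ σ) :
    ∑ j ∈ Finset.range (d + 1), σ ^ j ≤ 2 * σ ^ d := by
  induction d with
  | zero => simp
  | succ d ih =>
    rw [Finset.sum_range_succ]
    have h1 : 2 * σ ^ d ≤ σ ^ (d + 1) := by
      have := Nat.pow_le_pow_left hσ 1
      calc 2 * σ ^ d ≤ σ * σ ^ d := Nat.mul_le_mul_right _ hσ
        _ = σ ^ (d + 1) := by ring
    omega

/-- phrase length -/
def lzl (L : List ℕ) (k : ℕ) : ℕ := L.getD k 0
/-- phrase start -/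
def lzi (L : List ℕ) (k : ℕ) : ℕ := ∑ t ∈ Finset.range k, lzl L t
/-- phrase extended by one character -/
def lzE {σ : ℕ} (X : List (Fin σ)) (L : List ℕ) (k : ℕ) : List (Fin σ) :=
  (X.drop (lzi L k)).take (lzl L k + 1)

section core
variable {σ : ℕ} {X : List (Fin σ)} {L : List ℕ}

lemma lz_phrase (h : IsLZParse X L) {k : ℕ} (hk : k < L.length) :
    IsLZPhrase X (lzi L k) (lzl L k) := by
  have h2 := h.2 k hk
  rw [lz_take_sum] at h2
  rw [show L.get ⟨k, hk⟩ = lzl L k from (List.getD_eq_getElem L 0 hk).symm] at h2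
  exact h2

lemma lz_one (h : IsLZParse X L) {k : ℕ} (hk : k < L.length) : 1 ≤ lzl L k := by
  rcases lz_phrase h hk with ⟨h1, _, _⟩ | ⟨h1, _, _⟩ <;> omega

lemma lz_isum (h : IsLZParse X L) : lzi L L.length = X.length := by
  rw [lzi]; simp only [lzl]; rw [← lz_sum_eq]; exact h.1

lemma lz_i_mono {j k : ℕ} (hjk : j ≤ k) : lzi L j ≤ lzi L k :=
  Finset.sum_le_sum_of_subset (Finset.range_subset_range.mpr hjk)

lemma lz_i_succ (L : List ℕ) (k : ℕ) : lzi L (k + 1) = lzi L k + lzl L k :=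
  Finset.sum_range_succ _ _

lemma lz_ext (h : IsLZParse X L) {k : ℕ} (hk : k + 1 < L.length) :
    lzi L k + lzl L k + 1 ≤ X.length := by
  have h1 := lz_i_succ L k
  have h2 := lz_i_succ L (k + 1)
  have h3 : lzi L (k + 1 + 1) ≤ lzi L L.length := lz_i_mono (by omega)
  have h4 := lz_one h hk
  have h5 := lz_isum h
  omega

lemma lz_Elen (h : IsLZParse X L) {k : ℕ} (hk : k + 1 < L.length) :
    (lzE X L k).length = lzl L k + 1 := by
  have := lz_ext h hk
  simp only [lzE, List.length_take, List.length_drop]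
  omega

lemma lz_Einj (h : IsLZParse X L) {j k : ℕ} (hjk : j < k) (hk : k + 1 < L.length) :
    lzE X L j ≠ lzE X L k := by
  intro heq
  have hj : j + 1 < L.length := by omega
  have hlen : lzl L j = lzl L k := by
    have := congrArg List.length heq
    rw [lz_Elen h hj, lz_Elen h hk] at this
    omega
  have hij : lzi L j + lzl L j ≤ lzi L k := by
    have h1 := lz_i_succ L j
    have h2 : lzi L (j + 1) ≤ lzi L k := lz_i_mono hjk
    omega
  have hone := lz_one h (show j < L.length by omega)
  have hijlt : lzi L j < lzi L k := by omega
  have hocc : occursAt X (lzi L j) (lzi L k) (lzl L k + 1) := by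
    refine ⟨?_, lz_ext h hk, ?_⟩
    · have := lz_ext h hj; omega
    · have heq' : (X.drop (lzi L j)).take (lzl L j + 1)
          = (X.drop (lzi L k)).take (lzl L k + 1) := heq
      rwa [hlen] at heq'
  rcases lz_phrase h (show k < L.length by omega) with ⟨h1, _, hfirst⟩ | ⟨_, _, hmax⟩
  · exact hfirst (lzi L j) hijlt
      (lz_firstChar X (lzi L j) (lzi L k) (lzl L k + 1) (by omega) hocc.2.2)
  · have := hmax (lzl L k + 1) (lz_ext h hk) ⟨lzi L j, hijlt, hocc⟩
    omega

lemma lz_count (hσ : 2 ≤ σ) (h : IsLZParse X L) (d : ℕ) (hd : 1 ≤ d) :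
    L.length ≤ 2 * σ ^ d + X.length / d + 1 := by
  set z := L.length with hz
  rcases Nat.eq_zero_or_pos z with hz0 | hz1
  · exact le_trans (le_of_eq hz0) (Nat.zero_le _)
  set P : Finset ℕ := Finset.range (z - 1) with hP
  set small := P.filter (fun k => lzl L k + 1 ≤ d) with hsmalldef
  set big := P.filter (fun k => ¬ (lzl L k + 1 ≤ d)) with hbigdef
  have hcards : small.card + big.card = z - 1 := by
    rw [hsmalldef, hbigdef, Finset.card_filter_add_card_filter_not, hP,
      Finset.card_range]
  -- small bound
  have hsmall : small.card ≤ 2 * σ ^ d := by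
    classical
    set S : Finset (List (Fin σ)) := (Finset.range (d + 1)).biUnion
      (fun j => Finset.univ.image (fun v : List.Vector (Fin σ) j => v.toList)) with hS
    have hmap : ∀ k ∈ small, lzE X L k ∈ S := by
      intro k hk
      rw [hsmalldef, Finset.mem_filter, hP, Finset.mem_range] at hk
      obtain ⟨hk1, hk2⟩ := hk
      have hkz : k + 1 < z := by omega
      refine Finset.mem_biUnion.mpr ⟨(lzE X L k).length, ?_, ?_⟩
      · rw [Finset.mem_range, lz_Elen h hkz]; omega
      · exact Finset.mem_image.mpr ⟨⟨lzE X L k, rfl⟩, Finset.mem_univ _, rfl⟩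
    have hinj : Set.InjOn (lzE X L) ↑small := by
      intro a ha b hb hab
      simp only [hsmalldef, Finset.coe_filter, Set.mem_setOf_eq, hP,
        Finset.mem_range] at ha hb
      by_contra hne
      rcases Nat.lt_or_ge a b with hlt | hge
      · exact lz_Einj h hlt (by omega) hab
      · exact lz_Einj h (by omega : b < a) (by omega) hab.symm
    calc small.card ≤ S.card := Finset.card_le_card_of_injOn _ hmap hinj
      _ ≤ ∑ j ∈ Finset.range (d + 1),
            (Finset.univ.image (fun v : List.Vector (Fin σ) j => v.toList)).card :=
          Finset.card_biUnion_le
      _ ≤ ∑ j ∈ Finset.range (d + 1), σ ^ j := by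
          refine Finset.sum_le_sum fun j _ => ?_
          calc (Finset.univ.image (fun v : List.Vector (Fin σ) j => v.toList)).card
              ≤ (Finset.univ : Finset (List.Vector (Fin σ) j)).card :=
                Finset.card_image_le
            _ = σ ^ j := by rw [Finset.card_univ, card_vector, Fintype.card_fin]
      _ ≤ 2 * σ ^ d := lz_geom σ d hσ
  -- big bound
  have hbig : big.card * d ≤ X.length := by
    calc big.card * d = big.card • d := by rw [smul_eq_mul]
      _ ≤ ∑ k ∈ big, lzl L k := by
          refine Finset.card_nsmul_le_sum _ _ _ fun k hk => ?_
          rw [hbigdef, Finset.mem_filter] at hk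
          omega
      _ ≤ ∑ k ∈ Finset.range z, lzl L k := by
          refine Finset.sum_le_sum_of_subset ?_
          rw [hbigdef, hP]
          exact (Finset.filter_subset _ _).trans (Finset.range_subset_range.mpr (by omega))
      _ = X.length := by rw [hz]; simp only [lzl]; rw [← lz_sum_eq]; exact h.1
  have hbig' : big.card ≤ X.length / d := (Nat.le_div_iff_mul_le hd).mpr hbig
  omega



lemma lz_len_le {σ : ℕ} {X : List (Fin σ)} {L : List ℕ} (h : IsLZParse X L) :
    L.length ≤ X.length := by
  have h1 : L.length = ∑ _k ∈ Finset.range L.length, 1 := by simp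
  have h2 : ∑ _k ∈ Finset.range L.length, 1 ≤ ∑ k ∈ Finset.range L.length, lzl L k :=
    Finset.sum_le_sum fun k hk => lz_one h (Finset.mem_range.mp hk)
  have h3 : ∑ k ∈ Finset.range L.length, lzl L k = X.length := by
    simp only [lzl]; rw [← lz_sum_eq]; exact h.1
  omega

set_option maxHeartbeats 1000000 in
/-- the number of phrases `z` in the LZ77 parsing of a string of
length `n ≥ 2` over an alphabet of size `σ ≥ 2` satisfies
`z ≤ c · n · log σ / log n` for an absolute constant `c`. -/
theorem lz77_phrase_count_bound :
    ∃ c : ℝ, 0 < c ∧ ∀ (σ : ℕ) (X : List (Fin σ)) (L : List ℕ),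
      2 ≤ σ → 2 ≤ X.length → IsLZParse X L →
      (L.length : ℝ) ≤ c * (X.length : ℝ) * Real.log σ / Real.log X.length := by
  refine ⟨20, by norm_num, ?_⟩
  intro σ X L hσ hn hp
  have hn2 : (2:ℝ) ≤ (X.length : ℝ) := by exact_mod_cast hn
  have hσ2 : (2:ℝ) ≤ (σ : ℝ) := by exact_mod_cast hσ
  set n : ℝ := (X.length : ℝ) with hn'
  have hlogn : 0 < Real.log n := Real.log_pos (by linarith)
  have hlogσ : 0 < Real.log σ := Real.log_pos (by linarith)
  have hlog2 : (0.6931471803:ℝ) < Real.log 2 := Real.log_two_gt_d9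
  have hlogσ2 : Real.log 2 ≤ Real.log σ := Real.log_le_log (by norm_num) (by linarith)
  have hsq : Real.sqrt n * Real.sqrt n = n := Real.mul_self_sqrt (by linarith)
  have hsqpos : 0 < Real.sqrt n := Real.sqrt_pos.mpr (by linarith)
  have hlogn_le : Real.log n ≤ 2 * Real.sqrt n := by
    nlinarith [Real.log_le_sub_one_of_pos (show (0:ℝ) < Real.sqrt n from hsqpos),
      Real.log_sqrt (show (0:ℝ) ≤ n by linarith)]
  by_cases hcase : Real.log n ≤ 2 * Real.log σ
  · have hz : (L.length : ℝ) ≤ n := by rw [hn']; exact_mod_cast lz_len_le hp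
    rw [le_div_iff₀ hlogn]
    nlinarith [mul_le_mul_of_nonneg_right hz hlogn.le,
      mul_le_mul_of_nonneg_left hcase (show (0:ℝ) ≤ n by linarith)]
  · push_neg at hcase
    set x : ℝ := Real.log n / (2 * Real.log σ) with hx
    have hx1 : 1 < x := (one_lt_div (by positivity)).mpr hcase
    set d : ℕ := ⌊x⌋₊ with hd
    have hd1 : 1 ≤ d := (Nat.one_le_floor_iff x).mpr hx1.le
    have hdr : (1:ℝ) ≤ (d:ℝ) := by exact_mod_cast hd1
    have hdx : (d:ℝ) ≤ x := Nat.floor_le (by positivity)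
    have hd2 : x < 2 * (d:ℝ) := by
      have := Nat.lt_floor_add_one x
      rw [← hd] at this
      linarith
    have hxeq : x * (2 * Real.log σ) = Real.log n :=
      div_mul_cancel₀ _ (by positivity)
    have hcount := lz_count hσ hp d hd1
    have hdiv : ((X.length / d : ℕ) : ℝ) ≤ n / (d:ℝ) := by
      rw [hn']; exact Nat.cast_div_le
    have hr : (L.length:ℝ) ≤ 2 * (σ:ℝ)^d + n/(d:ℝ) + 1 := by
      have h1 : (L.length : ℝ) ≤ 2 * (σ:ℝ)^d + ((X.length / d : ℕ) : ℝ) + 1 := by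
        exact_mod_cast hcount
      linarith
    have hσd : (σ:ℝ)^d ≤ Real.sqrt n := by
      rw [← Real.log_le_log_iff (by positivity) hsqpos, Real.log_pow,
        Real.log_sqrt (by linarith)]
      have h1 : (d:ℝ) * Real.log σ ≤ x * Real.log σ :=
        mul_le_mul_of_nonneg_right hdx hlogσ.le
      have h2 : x * Real.log σ = Real.log n / 2 := by linarith [hxeq]
      linarith
    have hxd : Real.log n < 4 * Real.log σ * (d:ℝ) := by
      have h3 : x * Real.log σ < 2 * (d:ℝ) * Real.log σ :=
        mul_lt_mul_of_pos_right hd2 hlogσ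
      linarith [hxeq, h3]
    have hnd : n / (d:ℝ) ≤ 4 * n * Real.log σ / Real.log n := by
      rw [div_le_div_iff₀ (by linarith) hlogn]
      calc n * Real.log n ≤ n * (4 * Real.log σ * (d:ℝ)) :=
            mul_le_mul_of_nonneg_left hxd.le (by linarith)
        _ = 4 * n * Real.log σ * (d:ℝ) := by ring
    have hs1 : (1:ℝ) ≤ Real.sqrt n := by nlinarith [hsq, hsqpos]
    have h1 : 2 * Real.sqrt n ≤ 6 * n * Real.log σ / Real.log n := by
      rw [le_div_iff₀ hlogn]
      have ha : 2 * Real.sqrt n * Real.log n ≤ 2 * Real.sqrt n * (2 * Real.sqrt n) :=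
        mul_le_mul_of_nonneg_left hlogn_le (by positivity)
      have hb : 2 * Real.sqrt n * (2 * Real.sqrt n) = 4 * n := by
        rw [show 2 * Real.sqrt n * (2 * Real.sqrt n)
            = 4 * (Real.sqrt n * Real.sqrt n) by ring, hsq]
      have hc : (0:ℝ) ≤ n * (6 * Real.log σ - 4) := by
        apply mul_nonneg (by linarith); linarith
      nlinarith [ha, hb, hc]
    have h2 : (1:ℝ) ≤ 3 * n * Real.log σ / Real.log n := by
      rw [le_div_iff₀ hlogn]
      have hs : Real.sqrt n ≤ n := by nlinarith [hsq, hs1]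
      have hc : (0:ℝ) ≤ n * (3 * Real.log σ - 2) := by
        apply mul_nonneg (by linarith); linarith
      nlinarith [hlogn_le, hs, hc]
    calc (L.length:ℝ) ≤ 2 * (σ:ℝ)^d + n/(d:ℝ) + 1 := hr
      _ ≤ 2 * Real.sqrt n + 4 * n * Real.log σ / Real.log n + 1 := by linarith
      _ ≤ 6 * n * Real.log σ / Real.log n + 4 * n * Real.log σ / Real.log n
          + 3 * n * Real.log σ / Real.log n := by linarith
      _ = 13 * n * Real.log σ / Real.log n := by ring
      _ ≤ 20 * n * Real.log σ / Real.log n := by gcongr <;> linarith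
end core
end

section
/- Elias–Fano space bound: a strictly increasing sequence x_1 < x_2 < … < x_n of integers from [1..u] (with n and u powers of two, n ≤ u) can be encoded by (i) an array A storing the log(u/n) least significant bits of each x_i, and (ii) a bitvector V of length 2n containing, in order, 0^{x'_1} 1 0^{x'_2 − x'_1} 1 … 0^{x'_n − x'_{n−1}} 1 where x'_i = ⌊x_i · n / u⌋. This encoding uses exactly n·log(u/n) + 2n bits, and the pair (A, V) uniquely determines the sequence. -/
/-- Upper part (top `log n` bits) of `x i` in the Elias–Fano encoding. -/
def efHigh (u n : ℕ) (x : ℕ → ℕ) (i : ℕ) : ℕ := x i / (u / n)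

/-- Lower part (`log (u/n)` least significant bits) of `x i`. -/
def efLow (u n : ℕ) (x : ℕ → ℕ) (i : ℕ) : ℕ := x i % (u / n)

/-- The unary-coded bitvector `0^{x'_1} 1 0^{x'_2 − x'_1} 1 … 0^{x'_n − x'_{n−1}} 1`. -/
def efUnary (u n : ℕ) (x : ℕ → ℕ) : List Bool :=
  ((List.range n).map (fun i =>
    List.replicate
      (efHigh u n x i - (if i = 0 then 0 else efHigh u n x (i - 1))) false
      ++ [true])).flatten

/-- The bitvector `V`, padded with zeros to length `2n`. -/
def efV (u n : ℕ) (x : ℕ → ℕ) : List Bool :=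
  efUnary u n x ++ List.replicate (2 * n - (efUnary u n x).length) false

/-- one unary block -/
def efBlock (k : ℕ) : List Bool := List.replicate k false ++ [true]

lemma efBlock_inj : ∀ (k1 k2 : ℕ) (t1 t2 : List Bool),
    efBlock k1 ++ t1 = efBlock k2 ++ t2 → k1 = k2 ∧ t1 = t2 := by
  intro k1
  induction k1 with
  | zero =>
    intro k2 t1 t2 h
    cases k2 with
    | zero => simpa [efBlock] using h
    | succ m => simp [efBlock, List.replicate_succ] at h
  | succ m ih =>
    intro k2 t1 t2 h
    cases k2 with
    | zero => simp [efBlock, List.replicate_succ] at h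
    | succ m2 =>
      simp only [efBlock, List.replicate_succ, List.cons_append, List.cons.injEq] at h
      obtain ⟨-, h⟩ := h
      have := ih m2 t1 t2 (by simpa [efBlock] using h)
      exact ⟨by omega, this.2⟩

lemma efList_inj : ∀ (l1 l2 : List ℕ), l1.length = l2.length →
    (l1.map efBlock).flatten = (l2.map efBlock).flatten → l1 = l2 := by
  intro l1
  induction l1 with
  | nil => intro l2 hl _; simpa using (List.length_eq_zero_iff.mp hl.symm).symm
  | cons k t ih =>
    intro l2 hl h
    cases l2 with
    | nil => simp at hl
    | cons k2 t2 =>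
      simp only [List.map_cons, List.flatten_cons] at h
      obtain ⟨h1, h2⟩ := efBlock_inj k k2 _ _ h
      simp at hl
      exact by rw [h1, ih t2 hl h2]

/-- equal after padding with falses ⇒ equal, when both end with `true` -/
lemma efPad_inj : ∀ (s1 s2 : List Bool) (p q : ℕ),
    (s1 ++ [true]) ++ List.replicate p false = (s2 ++ [true]) ++ List.replicate q false →
    s1 ++ [true] = s2 ++ [true] := by
  intro s1
  induction s1 with
  | nil =>
    intro s2 p q h
    cases s2 with
    | nil => rfl
    | cons c s2' =>
      exfalso
      simp only [List.nil_append, List.cons_append, List.cons.injEq] at h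
      have hm : (true : Bool) ∈ List.replicate p false := by
        rw [h.2]; simp
      simp [List.mem_replicate] at hm
  | cons a s1' ih =>
    intro s2 p q h
    cases s2 with
    | nil =>
      exfalso
      simp only [List.nil_append, List.cons_append, List.cons.injEq] at h
      have hm : (true : Bool) ∈ List.replicate q false := by
        rw [← h.2]; simp
      simp [List.mem_replicate] at hm
    | cons c s2' =>
      simp only [List.cons_append, List.cons.injEq] at h ⊢
      exact ⟨h.1, ih s2' p q h.2⟩

/-- length of a unary-coded sequence of differences of a locally monotone `f` -/
lemma efUnary_len (f : ℕ → ℕ) :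
    ∀ m, 1 ≤ m → (∀ i, i + 1 < m → f i ≤ f (i + 1)) →
    (((List.range m).map (fun i =>
        efBlock (f i - (if i = 0 then 0 else f (i - 1))))).flatten).length
      = m + f (m - 1) := by
  intro m
  induction m with
  | zero => omega
  | succ s ih =>
    intro _ hmono
    rcases Nat.eq_zero_or_pos s with hs | hs
    · subst hs
      simp [List.range_succ, efBlock, Function.comp]
      omega
    · rw [List.range_succ, List.map_append, List.flatten_append]
      have hlen := ih hs (fun i hi => hmono i (by omega))
      have hss : s ≠ 0 := by omega
      have hle : f (s - 1) ≤ f s := by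
        have := hmono (s - 1) (by omega)
        simpa [Nat.sub_add_cancel hs] using this
      have hlast : ((List.map (fun i =>
          efBlock (f i - (if i = 0 then 0 else f (i - 1)))) [s]).flatten).length
          = (f s - f (s - 1)) + 1 := by
        simp [efBlock, if_neg hss]
      rw [List.length_append, hlen, hlast]
      simp only [Nat.add_sub_cancel]
      omega

/-- decompose the unary code: the last block split off -/
lemma efUnary_split (f : ℕ → ℕ) (m : ℕ) (hm : 1 ≤ m) :
    ∃ s : List Bool,
      (((List.range m).map (fun i =>
          efBlock (f i - (if i = 0 then 0 else f (i - 1))))).flatten)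
        = s ++ [true] := by
  obtain ⟨t, ht⟩ : ∃ t, m = t + 1 := ⟨m - 1, by omega⟩
  subst ht
  rw [List.range_succ, List.map_append, List.flatten_append]
  refine ⟨(((List.range t).map (fun i =>
      efBlock (f i - (if i = 0 then 0 else f (i - 1))))).flatten)
      ++ List.replicate (f t - (if t = 0 then 0 else f (t - 1))) false, ?_⟩
  simp [efBlock]

/-- Elias–Fano encoding of a strictly increasing sequence
`x_1 < … < x_n` from `[1..u]` (`n ≤ u` powers of two): the bitvector `V` has
exactly `2n` bits and each low part fits in `log(u/n)` bits (i.e. is `< u/n`),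
so the encoding uses exactly `n·log(u/n) + 2n` bits; and the pair `(A, V)`
uniquely determines the sequence (the encoding map is injective). -/
theorem elias_fano_encoding (u n a b : ℕ) (hu : u = 2 ^ a) (hn : n = 2 ^ b)
    (hnu : n ≤ u) :
    (∀ x : ℕ → ℕ, (∀ i < n, 1 ≤ x i ∧ x i ≤ u) →
        StrictMonoOn x (Set.Iio n) →
        (efV u n x).length = 2 * n ∧ ∀ i < n, efLow u n x i < u / n) ∧
    (∀ x y : ℕ → ℕ,
        (∀ i < n, 1 ≤ x i ∧ x i ≤ u) → StrictMonoOn x (Set.Iio n) →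
        (∀ i < n, 1 ≤ y i ∧ y i ≤ u) → StrictMonoOn y (Set.Iio n) →
        (∀ i < n, efLow u n x i = efLow u n y i) →
        efV u n x = efV u n y →
        ∀ i < n, x i = y i) := by
  have hba : b ≤ a := by
    rw [hu, hn] at hnu
    exact (Nat.pow_le_pow_iff_right (by norm_num)).mp hnu
  have hun : u / n = 2 ^ (a - b) := by
    rw [hu, hn, Nat.pow_div hba (by norm_num)]
  have hunpos : 0 < u / n := by rw [hun]; positivity
  have huun : u / (u / n) = n := by
    rw [hun, hu, hn, Nat.pow_div (by omega) (by norm_num)]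
    congr 1; omega
  -- efUnary as mapped blocks
  have hblocks : ∀ x : ℕ → ℕ, efUnary u n x =
      ((List.range n).map (fun i =>
        efBlock (efHigh u n x i - (if i = 0 then 0 else efHigh u n x (i - 1))))).flatten := by
    intro x; rfl
  -- monotonicity & bound of highs
  have hmono : ∀ x : ℕ → ℕ, StrictMonoOn x (Set.Iio n) →
      ∀ i, i + 1 < n → efHigh u n x i ≤ efHigh u n x (i + 1) := by
    intro x hsm i hi
    have : x i < x (i + 1) := hsm (by simp [Set.mem_Iio]; omega)
      (by simp [Set.mem_Iio]; omega) (by omega)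
    exact Nat.div_le_div_right (by omega)
  have hbound : ∀ x : ℕ → ℕ, (∀ i < n, 1 ≤ x i ∧ x i ≤ u) →
      ∀ i < n, efHigh u n x i ≤ n := by
    intro x hx i hi
    have := Nat.div_le_div_right (c := u / n) (hx i hi).2
    rwa [huun] at this
  have hlen : ∀ x : ℕ → ℕ, (∀ i < n, 1 ≤ x i ∧ x i ≤ u) →
      StrictMonoOn x (Set.Iio n) → 0 < n →
      (efUnary u n x).length = n + efHigh u n x (n - 1) := by
    intro x hx hsm hn0
    rw [hblocks]
    exact efUnary_len _ n (by omega) (hmono x hsm)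
  constructor
  · intro x hx hsm
    constructor
    · rcases Nat.eq_zero_or_pos n with h0 | h0
      · subst h0; simp [efV, efUnary]
      · have hl := hlen x hx hsm h0
        have hb := hbound x hx (n - 1) (by omega)
        have : (efUnary u n x).length ≤ 2 * n := by omega
        simp only [efV, List.length_append, List.length_replicate]
        omega
    · intro i hi
      exact Nat.mod_lt _ hunpos
  · intro x y hx hsmx hy hsmy hlow hV i hi
    have hn0 : 0 < n := by omega
    -- step 1: efUnary x = efUnary y
    obtain ⟨s1, hs1⟩ := efUnary_split (efHigh u n x) n hn0
    obtain ⟨s2, hs2⟩ := efUnary_split (efHigh u n y) n hn0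
    have hVx : efV u n x = (s1 ++ [true]) ++
        List.replicate (2 * n - (efUnary u n x).length) false := by
      rw [efV, hblocks x, hs1]
    have hVy : efV u n y = (s2 ++ [true]) ++
        List.replicate (2 * n - (efUnary u n y).length) false := by
      rw [efV, hblocks y, hs2]
    have hUeq : efUnary u n x = efUnary u n y := by
      rw [hblocks x, hblocks y, hs1, hs2]
      exact efPad_inj s1 s2 _ _ (by rw [← hVx, ← hVy]; exact hV)
    -- step 2: diffs are equal
    have hdiff : ∀ j < n,
        efHigh u n x j - (if j = 0 then 0 else efHigh u n x (j - 1)) =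
        efHigh u n y j - (if j = 0 then 0 else efHigh u n y (j - 1)) := by
      have := efList_inj
        ((List.range n).map (fun i =>
          efHigh u n x i - (if i = 0 then 0 else efHigh u n x (i - 1))))
        ((List.range n).map (fun i =>
          efHigh u n y i - (if i = 0 then 0 else efHigh u n y (i - 1))))
        (by simp)
        (by
          have h := hUeq
          rw [hblocks x, hblocks y] at h
          simpa only [List.map_map, Function.comp_def] using h)
      rw [List.map_eq_map_iff] at this
      intro j hj
      exact this j (List.mem_range.mpr hj)
    -- step 3: highs are equal, by induction
    have hhigh : ∀ j < n, efHigh u n x j = efHigh u n y j := by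
      intro j
      induction j with
      | zero =>
        intro hj
        have := hdiff 0 hj
        simpa using this
      | succ k ih =>
        intro hj
        have hk := ih (by omega)
        have hd := hdiff (k + 1) hj
        have h1 := hmono x hsmx k (by omega)
        have h2 := hmono y hsmy k (by omega)
        have hd' : efHigh u n x (k + 1) - efHigh u n x k =
            efHigh u n y (k + 1) - efHigh u n y k := by simpa using hd
        omega
    -- step 4: combine with lows
    have hh := hhigh i hi
    have hl := hlow i hi
    simp only [efHigh] at hh
    simp only [efLow] at hl
    calc x i = (u / n) * (x i / (u / n)) + x i % (u / n) :=
          (Nat.div_add_mod _ _).symm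
      _ = (u / n) * (y i / (u / n)) + y i % (u / n) := by rw [hh, hl]
      _ = y i := Nat.div_add_mod _ _
end

section
/- Elias–Fano select correctness: with the encoding above, for every i ∈ [1..n], if j is the position of the i-th one in the bitvector V, then the number of zeros in V[1..j] equals x'_i = ⌊x_i/(u/n)⌋, and hence x_i = (j − i)·(u/n) + A[i]. -/
def blk (h : ℕ → ℕ) (k : ℕ) : List Bool :=
  List.replicate (h k - (if k = 0 then 0 else h (k - 1))) false ++ [true]

lemma flatten_facts (h : ℕ → ℕ) (i : ℕ) (hm : ∀ k, k < i → h k ≤ h (k+1)) :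
    (((List.range (i+1)).map (blk h)).flatten).length = h i + i + 1 ∧
    (((List.range (i+1)).map (blk h)).flatten).count true = i + 1 ∧
    (((List.range (i+1)).map (blk h)).flatten).count false = h i ∧
    ∃ m, ((List.range (i+1)).map (blk h)).flatten = m ++ [true] := by
  induction i with
  | zero =>
    simp [show List.range 1 = [0] from rfl, blk, List.count_replicate]
  | succ k ih =>
    obtain ⟨hl, ht, hf, -⟩ := ih (fun m hm' => hm m (Nat.lt_succ_of_lt hm'))
    have hk : h k ≤ h (k+1) := hm k (Nat.lt_succ_self k)
    rw [List.range_succ (n := k+1)]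
    simp only [List.map_append, List.flatten_append, List.map_cons, List.map_nil,
      List.flatten_cons, List.flatten_nil, List.append_nil]
    refine ⟨?_, ?_, ?_, ?_⟩
    · simp [blk, hl]; omega
    · simp [blk, ht, List.count_replicate]
    · simp [blk, hf, List.count_replicate]; omega
    · exact ⟨_, by rw [blk, ← List.append_assoc]⟩

lemma count_true_strict (l : List Bool) {j j' : ℕ} (hjj : j < j')
    (hj' : l[j']? = some true) :
    (l.take (j+1)).count true < (l.take (j'+1)).count true := by
  have hsplit : l.take (j'+1) = l.take (j+1) ++ (l.take (j'+1)).drop (j+1) := by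
    conv_lhs => rw [← List.take_append_drop (j+1) (l.take (j'+1))]
    rw [List.take_take, min_eq_left (by omega)]
  have hseg : ((l.take (j'+1)).drop (j+1))[j' - j - 1]? = some true := by
    rw [List.getElem?_drop, List.getElem?_take, if_pos (by omega),
      show j + 1 + (j' - j - 1) = j' from by omega]
    exact hj'
  have hmem : true ∈ (l.take (j'+1)).drop (j+1) := by
    have := List.getElem?_eq_some_iff.mp hseg
    obtain ⟨hlt, he⟩ := this
    exact he ▸ List.getElem_mem hlt
  rw [hsplit, List.count_append]
  have : 0 < ((l.take (j'+1)).drop (j+1)).count true := List.count_pos_iff.mpr hmem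
  omega


/-- Elias–Fano select correctness.  If `j` is the (0-based)
position of the `(i+1)`-th one in `V`, then the number of zeros in `V[0..j]`
equals `x'_i = ⌊x i / (u/n)⌋`, and hence `x i = (j − i)·(u/n) + A[i]`. -/
theorem elias_fano_select (u n a b : ℕ) (hu : u = 2 ^ a) (hn : n = 2 ^ b)
    (hnu : n ≤ u) (x : ℕ → ℕ)
    (hx : ∀ i < n, 1 ≤ x i ∧ x i ≤ u) (hmono : StrictMonoOn x (Set.Iio n))
    (i : ℕ) (hi : i < n) (j : ℕ)
    (hj1 : (efV u n x)[j]? = some true)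
    (hj2 : ((efV u n x).take (j + 1)).count true = i + 1) :
    ((efV u n x).take (j + 1)).count false = efHigh u n x i ∧
    x i = (j - i) * (u / n) + efLow u n x i := by
  set h := efHigh u n x with hh
  have hmonoh : ∀ k, k < i → h k ≤ h (k+1) := by
    intro k hk
    have hx1 : x k < x (k+1) :=
      hmono (by simp only [Set.mem_Iio]; omega) (by simp only [Set.mem_Iio]; omega) (by omega)
    exact Nat.div_le_div_right hx1.le
  obtain ⟨hl, ht, hf, m, hmeq⟩ := flatten_facts h i hmonoh
  set P := ((List.range (i+1)).map (blk h)).flatten with hP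
  -- efUnary is P ++ rest
  have hun : efUnary u n x = ((List.range n).map (blk h)).flatten := rfl
  have hrange : List.range n = List.range (i+1) ++ (List.range n).drop (i+1) := by
    conv_lhs => rw [← List.take_append_drop (i+1) (List.range n)]
    rw [List.take_range, min_eq_left (by omega)]
  have h2 : ((List.range n).map (blk h)).flatten
      = P ++ (((List.range n).drop (i+1)).map (blk h)).flatten := by
    conv_lhs => rw [hrange]
    rw [List.map_append, List.flatten_append]
  have hsplit : ∃ rest, efV u n x = P ++ rest := by
    refine ⟨(((List.range n).drop (i+1)).map (blk h)).flatten
      ++ List.replicate (2 * n - (efUnary u n x).length) false, ?_⟩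
    rw [efV, hun, h2, List.append_assoc]
  obtain ⟨rest, hrest⟩ := hsplit
  -- key position
  have hmlen : m.length = h i + i := by
    have := hl
    rw [hmeq] at this
    simp at this; omega
  have hj0true : (efV u n x)[h i + i]? = some true := by
    rw [hrest, List.getElem?_append_left (by rw [hl]; omega), hmeq, ← hmlen,
      List.getElem?_concat_length]
  have htake : (efV u n x).take (h i + i + 1) = P := by
    rw [hrest, ← hl, List.take_left]
  have hcount0 : ((efV u n x).take (h i + i + 1)).count true = i + 1 := by
    rw [htake]; exact ht
  have hj : j = h i + i := by
    rcases lt_trichotomy j (h i + i) with hlt | heq | hgt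
    · have := count_true_strict (efV u n x) hlt hj0true
      omega
    · exact heq
    · have := count_true_strict (efV u n x) hgt hj1
      omega
  subst hj
  constructor
  · rw [htake]; exact hf
  · have hd : (h i + i - i) = h i := by omega
    rw [hd, hh]
    simp only [efHigh, efLow]
    exact (Nat.div_add_mod' _ _).symm
end

section
/- Rightmost parsing time bound for the basic algorithm: in the suffix tree of X with z marked internal nodes (one per phrase), if each phrase of length m corresponds to a marked node with at most m marked proper ancestors, and at most σ phrases are associated with each marked node, then the total number of subtree-node visits over all phrase queries is at most σ · Σ m_j = σ·n, where m_j are the phrase lengths summing to n. -/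
/-- rightmost-parsing time bound for the basic algorithm.
Marked suffix-tree nodes are the images `f j` of the `z` phrases; phrase `j`
has length `m j`, `∑ m j = n`; each marked node `f j` has at most `m j`
marked proper ancestors; at most `σ` phrases are associated with any node;
phrases at the same node have equal length (the string depth).  Each marked
node `α` is visited once per phrase whose node is a marked ancestor of `α`,
so the total number of subtree-node visits is at most `σ · ∑ m j = σ · n`. -/
theorem rightmost_basic_time_bound {ν : Type*} [Fintype ν] [DecidableEq ν]
    (anc : ν → ν → Prop) [DecidableRel anc]
    (z σ n : ℕ) (f : Fin z → ν) (m : Fin z → ℕ)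
    (hsum : ∑ j, m j = n)
    (hanc : ∀ j : Fin z,
      ((Finset.univ.image f).filter (fun β => anc β (f j))).card ≤ m j)
    (hphr : ∀ β : ν, (Finset.univ.filter (fun j => f j = β)).card ≤ σ)
    (hdepth : ∀ j j' : Fin z, f j = f j' → m j = m j') :
    ∑ α ∈ Finset.univ.image f,
        (Finset.univ.filter (fun j => anc (f j) α)).card ≤ σ * n := by
  classical
  set G : ν → ℕ := fun α => ((Finset.univ.image f).filter (fun β => anc β α)).card with hG
  have step1 : ∀ α : ν, (Finset.univ.filter (fun j => anc (f j) α)).card ≤ σ * G α := by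
    intro α
    have hsub : Finset.univ.filter (fun j => anc (f j) α) ⊆
        ((Finset.univ.image f).filter (fun β => anc β α)).biUnion
          (fun β => Finset.univ.filter (fun j => f j = β)) := by
      intro j hj
      simp only [Finset.mem_filter, Finset.mem_univ, true_and] at hj
      simp only [Finset.mem_biUnion, Finset.mem_filter, Finset.mem_univ, true_and,
        Finset.mem_image]
      exact ⟨f j, ⟨⟨j, rfl⟩, hj⟩, rfl⟩
    calc (Finset.univ.filter (fun j => anc (f j) α)).card
        ≤ (((Finset.univ.image f).filter (fun β => anc β α)).biUnion
            (fun β => Finset.univ.filter (fun j => f j = β))).card :=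
          Finset.card_le_card hsub
      _ ≤ ∑ β ∈ (Finset.univ.image f).filter (fun β => anc β α),
            (Finset.univ.filter (fun j => f j = β)).card := Finset.card_biUnion_le
      _ ≤ ∑ _β ∈ (Finset.univ.image f).filter (fun β => anc β α), σ :=
          Finset.sum_le_sum (fun β _ => hphr β)
      _ = σ * G α := by rw [Finset.sum_const, smul_eq_mul, mul_comm]
  have step2 : ∑ α ∈ Finset.univ.image f, G α ≤ ∑ j, G (f j) := by
    rw [Finset.sum_comp G f]
    apply Finset.sum_le_sum
    intro α hα
    have hne : (Finset.univ.filter (fun j => f j = α)).Nonempty := by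
      rcases Finset.mem_image.mp hα with ⟨j, _, hj⟩
      exact ⟨j, by simp [hj]⟩
    have h1 : 1 ≤ (Finset.univ.filter (fun j => f j = α)).card :=
      Finset.card_pos.mpr hne
    calc G α = 1 * G α := (one_mul _).symm
      _ ≤ (Finset.univ.filter (fun j => f j = α)).card * G α :=
          Nat.mul_le_mul_right _ h1
      _ = (Finset.univ.filter (fun j => f j = α)).card • G α := by
          rw [smul_eq_mul]
  calc ∑ α ∈ Finset.univ.image f, (Finset.univ.filter (fun j => anc (f j) α)).card
      ≤ ∑ α ∈ Finset.univ.image f, σ * G α := Finset.sum_le_sum (fun α _ => step1 α)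
    _ = σ * ∑ α ∈ Finset.univ.image f, G α := by rw [Finset.mul_sum]
    _ ≤ σ * ∑ j, G (f j) := Nat.mul_le_mul_left _ step2
    _ ≤ σ * ∑ j, m j := Nat.mul_le_mul_left _ (Finset.sum_le_sum fun j _ => hanc j)
    _ = σ * n := by rw [hsum]
end
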